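/- arXiv:1907.05778 — 4 statements merged into one kernel-verified Lean document; each statement's English description precedes it below -/
import Mathlib

section
/- Let A, B, C be positive reals and s ≥ 2, P(y) = A·y^s − B·y − C, and ȳ = (B/(s·A))^{1/(s−1)}. Then for all y ≥ ȳ, P(y) ≥ (P''(ȳ)/2)·(y − ȳ)² + P(ȳ), where P''(ȳ) = s(s−1)·A·ȳ^{s−2}. -/
open Real

lemma bern2 (s : ℝ) (hs : 2 ≤ s) {x : ℝ} (hx : 0 ≤ x) :
    1 + s * x + s * (s - 1) / 2 * x ^ 2 ≤ (1 + x) ^ s := by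
  set f : ℝ → ℝ := fun x => (1 + x) ^ s - (1 + s * x + s * (s - 1) / 2 * x ^ 2) with hf
  have hd : ∀ x : ℝ, HasDerivAt f (s * (1 + x) ^ (s - 1) - (s + s * (s - 1) * x)) x := by
    intro x
    have h1 : HasDerivAt (fun x : ℝ => 1 + x) 1 x := (hasDerivAt_id x).const_add 1
    have h2 : HasDerivAt (fun x : ℝ => (1 + x) ^ s) (1 * s * (1 + x) ^ (s - 1)) x :=
      h1.rpow_const (Or.inr (by linarith))
    have h3 : HasDerivAt (fun x : ℝ => 1 + s * x + s * (s - 1) / 2 * x ^ 2)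
        (s * 1 + s * (s - 1) / 2 * (2 * x ^ 1)) x := by
      have ha : HasDerivAt (fun x : ℝ => s * x) (s * 1) x :=
        (hasDerivAt_id x).const_mul s
      have hb : HasDerivAt (fun x : ℝ => s * (s - 1) / 2 * x ^ 2)
          (s * (s - 1) / 2 * (2 * x ^ 1)) x :=
        (hasDerivAt_pow 2 x).const_mul (s * (s - 1) / 2)
      exact ((ha.const_add 1).add hb)
    have := h2.sub h3
    refine this.congr_deriv ?_
    ring
  have hmono : MonotoneOn f (Set.Ici (0 : ℝ)) := by
    apply monotoneOn_of_deriv_nonneg (convex_Ici 0)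
    · exact fun x _ => ((hd x).differentiableAt).continuousAt.continuousWithinAt
    · exact fun x _ => ((hd x).differentiableAt).differentiableWithinAt
    · intro x hx'
      rw [interior_Ici] at hx'
      rw [(hd x).deriv]
      have hx0 : (0:ℝ) < x := hx'
      have hb : 1 + (s - 1) * x ≤ (1 + x) ^ (s - 1) :=
        one_add_mul_self_le_rpow_one_add (by linarith) (by linarith)
      nlinarith [hb, hs, hx0.le]
  have h0 : f 0 ≤ f x := hmono (by simp) hx hx
  have hf0 : f 0 = 0 := by simp [hf]
  rw [hf0] at h0
  simp only [hf] at h0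
  linarith

theorem stmt_3 (A B C s : ℝ) (hA : 0 < A) (hB : 0 < B) (hC : 0 < C) (hs : 2 ≤ s)
    (ybar : ℝ) (hybar : ybar = (B / (s * A)) ^ (1 / (s - 1))) :
    ∀ y : ℝ, ybar ≤ y →
      s * (s - 1) * A * ybar ^ (s - 2) / 2 * (y - ybar) ^ 2
          + (A * ybar ^ s - B * ybar - C)
        ≤ A * y ^ s - B * y - C := by
  intro y hy
  have hsA : 0 < s * A := by positivity
  have hq : 0 < B / (s * A) := by positivity
  have hyb : 0 < ybar := by rw [hybar]; positivity
  have hs1 : s - 1 ≠ 0 := by intro h; nlinarith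
  -- key fact: ybar ^ (s-1) = B / (s*A)
  have hkey : ybar ^ (s - 1) = B / (s * A) := by
    rw [hybar, ← Real.rpow_mul hq.le, one_div_mul_cancel hs1, Real.rpow_one]
  set Q : ℝ := ybar ^ (s - 2) with hQ
  have hQpos : 0 < Q := Real.rpow_pos_of_pos hyb _
  have hP : ybar ^ (s - 1) = Q * ybar := by
    rw [hQ, ← Real.rpow_add_one hyb.ne']
    ring_nf
  have hS : ybar ^ s = Q * ybar ^ 2 := by
    have : ybar ^ s = ybar ^ (s - 1) * ybar := by
      rw [← Real.rpow_add_one hyb.ne']; ring_nf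
    rw [this, hP]; ring
  have hBeq : B = s * A * (Q * ybar) := by
    rw [← hP, hkey]; field_simp
  set x : ℝ := (y - ybar) / ybar with hx
  have hx0 : 0 ≤ x := div_nonneg (by linarith) hyb.le
  have hxy : ybar * x = y - ybar := by rw [hx]; field_simp
  have hyeq : y = ybar * (1 + x) := by rw [hx]; field_simp; ring
  have hys : y ^ s = ybar ^ s * (1 + x) ^ s := by
    rw [hyeq, Real.mul_rpow hyb.le (by linarith)]
  have hbern := bern2 s hs hx0
  have hmul : A * ybar ^ s * (1 + s * x + s * (s - 1) / 2 * x ^ 2)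
      ≤ A * y ^ s := by
    rw [hys, ← mul_assoc]
    exact mul_le_mul_of_nonneg_left hbern (by positivity)
  have hexp : A * ybar ^ s * (1 + s * x + s * (s - 1) / 2 * x ^ 2)
      = A * Q * ybar ^ 2 + s * A * Q * ybar * (y - ybar)
        + s * (s - 1) / 2 * A * Q * (y - ybar) ^ 2 := by
    rw [hS, ← hxy]; ring
  rw [hexp] at hmul
  rw [hS, hBeq]
  nlinarith [hmul]
end

section
/- Let A, B, C be positive reals and s ≥ 2, P(y) = A·y^s − B·y − C, ȳ = (B/(s·A))^{1/(s−1)}, and let y* be the unique positive root of P. Then y* ≤ ȳ + sqrt(2·|P(ȳ)|/P''(ȳ)). -/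
set_option maxHeartbeats 1000000

lemma key_bernoulli2 (s : ℝ) (hs : 2 ≤ s) {t : ℝ} (ht : 1 ≤ t) :
    1 + s * (t - 1) + s * (s - 1) / 2 * (t - 1) ^ 2 ≤ t ^ s := by
  set f : ℝ → ℝ := fun x => x ^ s - s * (x - 1) - s * (s - 1) / 2 * (x - 1) ^ 2 with hf
  have hderiv : ∀ x ∈ Set.Ici (1 : ℝ),
      HasDerivAt f (s * x ^ (s - 1) - s - s * (s - 1) * (x - 1)) x := by
    intro x hx
    have h1 : HasDerivAt (fun x : ℝ => x ^ s) (s * x ^ (s - 1)) x :=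
      Real.hasDerivAt_rpow_const (Or.inr (by linarith))
    have h2 : HasDerivAt (fun x : ℝ => s * (x - 1)) s x := by
      simpa using ((hasDerivAt_id x).sub_const 1).const_mul s
    have h3 : HasDerivAt (fun x : ℝ => s * (s - 1) / 2 * (x - 1) ^ 2)
        (s * (s - 1) / 2 * (2 * (x - 1))) x := by
      have := (((hasDerivAt_id x).sub_const 1).pow 2).const_mul (s * (s - 1) / 2)
      simpa using this
    have := (h1.sub h2).sub h3
    refine this.congr_deriv ?_
    ring
  have hmono : MonotoneOn f (Set.Ici (1 : ℝ)) := by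
    apply monotoneOn_of_deriv_nonneg (convex_Ici 1)
    · intro x hx
      exact (hderiv x hx).continuousAt.continuousWithinAt
    · intro x hx
      rw [interior_Ici] at hx
      exact (hderiv x (Set.mem_Ici.mpr (le_of_lt (Set.mem_Ioi.mp hx)))).differentiableAt.differentiableWithinAt
    · intro x hx
      rw [interior_Ici] at hx
      have hx1 : 1 < x := hx
      rw [(hderiv x (le_of_lt hx1)).deriv]
      have hb : 1 + (s - 1) * (x - 1) ≤ (1 + (x - 1)) ^ (s - 1) :=
        one_add_mul_self_le_rpow_one_add (by linarith) (by linarith)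
      have hxx : (1 : ℝ) + (x - 1) = x := by ring
      rw [hxx] at hb
      nlinarith [hb, hs]
  have h1 : f 1 = 1 := by simp [hf, Real.one_rpow]
  have := hmono (Set.mem_Ici.mpr le_rfl) (Set.mem_Ici.mpr ht) ht
  rw [h1] at this
  simp only [hf] at this
  linarith

theorem stmt_4 (A B C s : ℝ) (hA : 0 < A) (hB : 0 < B) (hC : 0 < C) (hs : 2 ≤ s)
    (ybar : ℝ) (hybar : ybar = (B / (s * A)) ^ (1 / (s - 1)))
    (ystar : ℝ) (hpos : 0 < ystar) (hroot : A * ystar ^ s - B * ystar - C = 0) :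
    ystar ≤ ybar + Real.sqrt (2 * |A * ybar ^ s - B * ybar - C|
      / (s * (s - 1) * A * ybar ^ (s - 2))) := by
  have hs0 : (0 : ℝ) < s := by linarith
  have hs1 : (0 : ℝ) < s - 1 := by linarith
  have hBA : 0 < B / (s * A) := div_pos hB (mul_pos hs0 hA)
  have hy : 0 < ybar := by
    rw [hybar]; exact Real.rpow_pos_of_pos hBA _
  have hyne : ybar ≠ 0 := ne_of_gt hy
  have hpow1 : ybar ^ (s - 1) = B / (s * A) := by
    rw [hybar, ← Real.rpow_mul (le_of_lt hBA), one_div,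
      inv_mul_cancel₀ (ne_of_gt hs1), Real.rpow_one]
  have hBval : B = s * A * ybar ^ (s - 1) := by
    rw [hpow1]; field_simp
  have hys : ybar ^ s = ybar ^ (s - 1) * ybar := by
    conv_lhs => rw [show s = s - 1 + 1 by ring]
    rw [Real.rpow_add_one hyne]
  have hys2 : ybar ^ s = ybar ^ (s - 2) * ybar ^ 2 := by
    conv_lhs => rw [show s = s - 2 + 2 by ring]
    rw [Real.rpow_add hy, Real.rpow_two]
  have hvpos : 0 < ybar ^ s := Real.rpow_pos_of_pos hy s
  have hupos : 0 < ybar ^ (s - 2) := Real.rpow_pos_of_pos hy _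
  have hPbar : A * ybar ^ s - B * ybar - C = -((s - 1) * A * ybar ^ s + C) := by
    rw [hBval]
    nlinarith [hys]
  have hMpos : 0 < (s - 1) * A * ybar ^ s + C := by positivity
  have habs : |A * ybar ^ s - B * ybar - C| = (s - 1) * A * ybar ^ s + C := by
    rw [hPbar, abs_neg, abs_of_pos hMpos]
  rw [habs]
  have hsq0 : 0 ≤ Real.sqrt (2 * ((s - 1) * A * ybar ^ s + C)
      / (s * (s - 1) * A * ybar ^ (s - 2))) := Real.sqrt_nonneg _
  by_cases hcase : ystar ≤ ybar
  · linarith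
  push_neg at hcase
  obtain ⟨t, rfl⟩ : ∃ t, ystar = t * ybar := ⟨ystar / ybar, by field_simp⟩
  have ht1 : 1 ≤ t := by
    by_contra h
    push_neg at h
    nlinarith
  have htpow : (t * ybar) ^ s = t ^ s * ybar ^ s :=
    Real.mul_rpow (by linarith) (le_of_lt hy)
  have hkey := key_bernoulli2 s hs ht1
  have hkey2 : A * ybar ^ s * (1 + s * (t - 1) + s * (s - 1) / 2 * (t - 1) ^ 2)
      ≤ A * ybar ^ s * t ^ s :=
    mul_le_mul_of_nonneg_left hkey (le_of_lt (mul_pos hA hvpos))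
  rw [htpow, hBval] at hroot
  -- hroot : A * (t^s * ybar^s) - s*A*ybar^(s-1) * (t*ybar) - C = 0
  have hroott : A * ybar ^ s * t ^ s - s * A * ybar ^ s * t - C = 0 := by
    rw [hys] at hroot ⊢
    linear_combination hroot
  have hmain : s * (s - 1) / 2 * A * ybar ^ s * (t - 1) ^ 2
      ≤ (s - 1) * A * ybar ^ s + C := by
    nlinarith [hkey2, hroott]
  have hDpos : 0 < s * (s - 1) * A * ybar ^ (s - 2) := by positivity
  have hq : s * (s - 1) * A * ybar ^ (s - 2) * (t * ybar - ybar) ^ 2 / 2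
      ≤ (s - 1) * A * ybar ^ s + C := by
    have heq : s * (s - 1) * A * ybar ^ (s - 2) * (t * ybar - ybar) ^ 2 / 2
        = s * (s - 1) / 2 * A * ybar ^ s * (t - 1) ^ 2 := by
      rw [hys2]; ring
    rw [heq]; exact hmain
  have hsqle : (t * ybar - ybar) ^ 2
      ≤ 2 * ((s - 1) * A * ybar ^ s + C) / (s * (s - 1) * A * ybar ^ (s - 2)) := by
    rw [le_div_iff₀ hDpos]
    nlinarith [hq]
  have hfin := (Real.le_sqrt (by nlinarith : (0:ℝ) ≤ t * ybar - ybar)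
    (by positivity)).mpr hsqle
  linarith
end

section
/- Let x : ℝ → ℝ^d be a C² NT-periodic solution of M·ẍ + C·ẋ + K·x = −∇U(x) + f(t), where M, K are symmetric positive semi-definite, C is symmetric positive definite with smallest eigenvalue C_min > 0, U : ℝ^d → ℝ is C¹, and f is continuous and NT-periodic with mean f̂. Then the L²(0,NT)-norm of ẋ satisfies ‖ẋ‖_{L²(0,NT)} ≤ (1/C_min)·‖f − f̂‖_{L²(0,NT)}. -/
/-!
Along a solution, the energy `⟪ẋ, M ẋ⟫ / 2 + ⟪x, K x⟫ / 2 + U x - ⟪x, c⟫` has derivative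
`⟪ẋ, f - c⟫ - ⟪ẋ, C ẋ⟫` for every constant vector `c`. Integrating over a period kills the
energy, so `∫ ⟪ẋ, C ẋ⟫ = ∫ ⟪ẋ, f - c⟫`. Coercivity bounds the left side below by
`C_min ∫ ‖ẋ‖²`, and Young's inequality `2 ⟪u, w⟫ ≤ C_min ‖u‖² + ‖w‖² / C_min` bounds the right
side, whence `C_min² ∫ ‖ẋ‖² ≤ ∫ ‖f - c‖²`; here `c = f̂`.
-/

open MeasureTheory intervalIntegral

noncomputable def mv {d : ℕ} (M : Matrix (Fin d) (Fin d) ℝ)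
    (v : EuclideanSpace ℝ (Fin d)) : EuclideanSpace ℝ (Fin d) :=
  WithLp.toLp 2 (M.mulVec v)

open scoped RealInnerProductSpace

theorem Function.Periodic.deriv {F : Type*} [NormedAddCommGroup F] [NormedSpace ℝ F]
    {f : ℝ → F} {c : ℝ} (h : Function.Periodic f c) : Function.Periodic (deriv f) c :=
  fun t => by rw [← deriv_comp_add_const, funext h]

theorem Matrix.IsSymm.isSymmetric_toEuclideanCLM {n : Type*} [Fintype n] [DecidableEq n]
    {A : Matrix n n ℝ} (hA : A.IsSymm) :
    (Matrix.toEuclideanCLM (𝕜 := ℝ) A : EuclideanSpace ℝ n →ₗ[ℝ] _).IsSymmetric :=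
  Matrix.isSymmetric_toEuclideanLin_iff.mpr (Matrix.isHermitian_iff_isSymm.mpr hA)

theorem two_mul_real_inner_le {E : Type*} [NormedAddCommGroup E] [InnerProductSpace ℝ E]
    (u w : E) {a : ℝ} (ha : 0 < a) : 2 * ⟪u, w⟫ ≤ a * ‖u‖ ^ 2 + a⁻¹ * ‖w‖ ^ 2 := by
  have hsq : 0 ≤ a⁻¹ * (a * ‖u‖ - ‖w‖) ^ 2 := by positivity
  have hexp : a⁻¹ * (a * ‖u‖ - ‖w‖) ^ 2 = a * ‖u‖ ^ 2 + a⁻¹ * ‖w‖ ^ 2 - 2 * (‖u‖ * ‖w‖) := by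
    field_simp; ring
  linarith [real_inner_le_norm u w]

section DampedOscillator

variable {E : Type*} [NormedAddCommGroup E] [InnerProductSpace ℝ E]

theorem HasDerivAt.inner_apply_self {A : E →L[ℝ] E} (hA : (A : E →ₗ[ℝ] E).IsSymmetric)
    {γ : ℝ → E} {γ' : E} {t : ℝ} (h : HasDerivAt γ γ' t) :
    HasDerivAt (fun s => ⟪γ s, A (γ s)⟫) (2 * ⟪γ', A (γ t)⟫) t := by
  have hsum := h.inner ℝ (A.hasFDerivAt.comp_hasDerivAt t h)
  rwa [Function.comp_apply, ← A.coe_coe, ← hA, real_inner_comm, A.coe_coe, ← two_mul] at hsum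

theorem sqrt_integral_norm_sq_le_of_le_integral_inner {v g : ℝ → E} (hv : Continuous v)
    (hg : Continuous g) {a P : ℝ} (ha : 0 < a) (hP : 0 ≤ P)
    (h : a * ∫ t in 0..P, ‖v t‖ ^ 2 ≤ ∫ t in 0..P, ⟪v t, g t⟫) :
    √(∫ t in 0..P, ‖v t‖ ^ 2) ≤ 1 / a * √(∫ t in 0..P, ‖g t‖ ^ 2) := by
  set A := ∫ t in 0..P, ‖v t‖ ^ 2
  set D := ∫ t in 0..P, ‖g t‖ ^ 2
  have hYoung : 2 * ∫ t in 0..P, ⟪v t, g t⟫ ≤ a * A + a⁻¹ * D := by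
    simp only [A, D, ← intervalIntegral.integral_const_mul]
    have hii {φ : ℝ → ℝ} (hφ : Continuous φ) : IntervalIntegrable φ volume 0 P :=
      hφ.intervalIntegrable 0 P
    rw [← intervalIntegral.integral_add (hii (by fun_prop)) (hii (by fun_prop))]
    exact integral_mono_on hP (hii (by fun_prop)) (hii (by fun_prop))
      fun t _ => two_mul_real_inner_le (v t) (g t) ha
  have hA : A ≤ (1 / a) ^ 2 * D := by
    rw [show (1 / a) ^ 2 * D = a⁻¹ * (a⁻¹ * D) by ring, le_inv_mul_iff₀ ha]
    linarith
  calc √A ≤ √((1 / a) ^ 2 * D) := Real.sqrt_le_sqrt hA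
    _ = 1 / a * √D := by rw [Real.sqrt_mul (sq_nonneg _), Real.sqrt_sq (by positivity)]

variable [CompleteSpace E]

noncomputable def mechanicalEnergy (M K : E →L[ℝ] E) (U : E → ℝ) (c : E) (x : ℝ → E)
    (t : ℝ) : ℝ :=
  ⟪deriv x t, M (deriv x t)⟫ / 2 + ⟪x t, K (x t)⟫ / 2 + U (x t) - ⟪x t, c⟫

variable {M C K : E →L[ℝ] E} {U : E → ℝ} {x : ℝ → E}

theorem hasDerivAt_mechanicalEnergy (hM : (M : E →ₗ[ℝ] E).IsSymmetric)
    (hK : (K : E →ₗ[ℝ] E).IsSymmetric) (hU : Differentiable ℝ U) (hx : Differentiable ℝ x)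
    (hx' : Differentiable ℝ (deriv x)) (c : E) (t : ℝ) :
    HasDerivAt (mechanicalEnergy M K U c x)
      ⟪deriv x t, M (deriv (deriv x) t) + K (x t) + gradient U (x t) - c⟫ t := by
  have hxt := (hx t).hasDerivAt
  have hUx : HasDerivAt (fun s => U (x s)) ⟪deriv x t, gradient U (x t)⟫ t := by
    have := (hU (x t)).hasGradientAt.hasFDerivAt.comp_hasDerivAt t hxt
    rwa [InnerProductSpace.toDual_apply_apply, real_inner_comm] at this
  have hc : HasDerivAt (fun s => ⟪x s, c⟫) ⟪deriv x t, c⟫ t := by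
    simpa using hxt.inner ℝ (hasDerivAt_const t c)
  have hMsymm := hM (deriv x t) (deriv (deriv x) t)
  simp only [ContinuousLinearMap.coe_coe] at hMsymm
  refine ((((hx' t).hasDerivAt.inner_apply_self hM).div_const 2).add
    ((hxt.inner_apply_self hK).div_const 2)).add hUx |>.sub hc |>.congr_deriv ?_
  rw [real_inner_comm, hMsymm]
  simp only [inner_add_right, inner_sub_right]
  ring

theorem integral_inner_damping_eq_integral_inner_force (hM : (M : E →ₗ[ℝ] E).IsSymmetric)
    (hK : (K : E →ₗ[ℝ] E).IsSymmetric) (hU : Differentiable ℝ U) (hx : Differentiable ℝ x)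
    (hx' : Differentiable ℝ (deriv x)) {f : ℝ → E} (hf : Continuous f) (c : E) {P : ℝ}
    (hxP : x P = x 0) (hx'P : deriv x P = deriv x 0)
    (hode : ∀ t, M (deriv (deriv x) t) + C (deriv x t) + K (x t) = -gradient U (x t) + f t) :
    ∫ t in 0..P, ⟪deriv x t, C (deriv x t)⟫ = ∫ t in 0..P, ⟪deriv x t, f t - c⟫ := by
  have hv : Continuous (deriv x) := hx'.continuous
  have hbalance : ∀ t, HasDerivAt (mechanicalEnergy M K U c x)
      (⟪deriv x t, f t - c⟫ - ⟪deriv x t, C (deriv x t)⟫) t := fun t => by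
    have hforce : M (deriv (deriv x) t) + K (x t) + gradient U (x t) - c
        = f t - c - C (deriv x t) := by
      linear_combination (norm := module) hode t
    simpa only [hforce, inner_sub_right] using hasDerivAt_mechanicalEnergy hM hK hU hx hx' c t
  have hzero := integral_eq_sub_of_hasDerivAt (fun t _ => hbalance t)
    ((by fun_prop : Continuous _).intervalIntegrable 0 P)
  rw [mechanicalEnergy, mechanicalEnergy, hxP, hx'P, sub_self,
    intervalIntegral.integral_sub ((hv.inner (hf.sub continuous_const)).intervalIntegrable _ _)
      ((hv.inner (C.continuous.comp hv)).intervalIntegrable _ _)] at hzero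
  linarith

theorem sqrt_integral_norm_sq_deriv_le (hM : (M : E →ₗ[ℝ] E).IsSymmetric)
    (hK : (K : E →ₗ[ℝ] E).IsSymmetric) {a : ℝ} (ha : 0 < a)
    (hC : ∀ y, a * ‖y‖ ^ 2 ≤ ⟪y, C y⟫) (hU : Differentiable ℝ U) (hx : ContDiff ℝ 2 x)
    {P : ℝ} (hP : 0 ≤ P) (hxper : Function.Periodic x P) {f : ℝ → E} (hf : Continuous f)
    (c : E)
    (hode : ∀ t, M (deriv (deriv x) t) + C (deriv x t) + K (x t) = -gradient U (x t) + f t) :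
    √(∫ t in 0..P, ‖deriv x t‖ ^ 2) ≤ 1 / a * √(∫ t in 0..P, ‖f t - c‖ ^ 2) := by
  have hx' : Differentiable ℝ (deriv x) := (hx.deriv' (n := 1)).differentiable one_ne_zero
  have hv : Continuous (deriv x) := hx'.continuous
  refine sqrt_integral_norm_sq_le_of_le_integral_inner hv
    (by fun_prop : Continuous fun t => f t - c) ha hP ?_
  rw [← integral_inner_damping_eq_integral_inner_force hM hK hU (hx.differentiable two_ne_zero)
    hx' hf c (by simpa using hxper 0) (by simpa using hxper.deriv 0) hode,
    ← intervalIntegral.integral_const_mul]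
  exact integral_mono_on hP ((continuous_const.mul (hv.norm.pow 2)).intervalIntegrable _ _)
    ((hv.inner (C.continuous.comp hv)).intervalIntegrable _ _) fun t _ => hC (deriv x t)

end DampedOscillator

theorem stmt_8_general {d : ℕ} (N : ℕ) (T : ℝ) (hT : 0 < T)
    (M C K : Matrix (Fin d) (Fin d) ℝ) (hMs : M.IsSymm) (hKs : K.IsSymm)
    (Cmin : ℝ) (hCmin : 0 < Cmin)
    (hC : ∀ y : EuclideanSpace ℝ (Fin d), Cmin * ‖y‖ ^ 2 ≤ (inner ℝ y (mv C y) : ℝ))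
    (U : EuclideanSpace ℝ (Fin d) → ℝ) (hU : ContDiff ℝ 1 U)
    (f : ℝ → EuclideanSpace ℝ (Fin d)) (hf : Continuous f)
    (fhat : EuclideanSpace ℝ (Fin d))
    (x : ℝ → EuclideanSpace ℝ (Fin d)) (hx : ContDiff ℝ 2 x)
    (hxper : Function.Periodic x (N * T))
    (hode : ∀ t : ℝ, mv M (deriv (deriv x) t) + mv C (deriv x t) + mv K (x t)
      = -gradient U (x t) + f t) :
    Real.sqrt (∫ t in (0:ℝ)..(N * T), ‖deriv x t‖ ^ 2)
      ≤ (1 / Cmin) * Real.sqrt (∫ t in (0:ℝ)..(N * T), ‖f t - fhat‖ ^ 2) :=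
  -- `mv A` unfolds to `Matrix.toEuclideanCLM A`, so `hC` and `hode` are accepted as they stand.
  sqrt_integral_norm_sq_deriv_le (C := Matrix.toEuclideanCLM (𝕜 := ℝ) C)
    hMs.isSymmetric_toEuclideanCLM hKs.isSymmetric_toEuclideanCLM hCmin hC
    (hU.differentiable one_ne_zero) hx (by positivity) hxper hf fhat hode

theorem stmt_8 {d : ℕ} (N : ℕ) (T : ℝ) (hN : 1 ≤ N) (hT : 0 < T)
    (M C K : Matrix (Fin d) (Fin d) ℝ) (hMs : M.IsSymm) (hCs : C.IsSymm) (hKs : K.IsSymm)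
    (hMpsd : ∀ y : EuclideanSpace ℝ (Fin d), 0 ≤ (inner ℝ y (mv M y) : ℝ))
    (hKpsd : ∀ y : EuclideanSpace ℝ (Fin d), 0 ≤ (inner ℝ y (mv K y) : ℝ))
    (Cmin : ℝ) (hCmin : 0 < Cmin)
    (hC : ∀ y : EuclideanSpace ℝ (Fin d), Cmin * ‖y‖ ^ 2 ≤ (inner ℝ y (mv C y) : ℝ))
    (U : EuclideanSpace ℝ (Fin d) → ℝ) (hU : ContDiff ℝ 1 U)
    (f : ℝ → EuclideanSpace ℝ (Fin d)) (hf : Continuous f)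
    (hfper : Function.Periodic f (N * T))
    (fhat : EuclideanSpace ℝ (Fin d))
    (hfhat : fhat = (N * T : ℝ)⁻¹ • ∫ t in (0:ℝ)..(N * T), f t)
    (x : ℝ → EuclideanSpace ℝ (Fin d)) (hx : ContDiff ℝ 2 x)
    (hxper : Function.Periodic x (N * T))
    (hode : ∀ t : ℝ, mv M (deriv (deriv x) t) + mv C (deriv x t) + mv K (x t)
      = -gradient U (x t) + f t) :
    Real.sqrt (∫ t in (0:ℝ)..(N * T), ‖deriv x t‖ ^ 2)
      ≤ (1 / Cmin) * Real.sqrt (∫ t in (0:ℝ)..(N * T), ‖f t - fhat‖ ^ 2) :=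
  stmt_8_general N T hT M C K hMs hKs Cmin hCmin hC U hU f hf fhat x hx hxper hode
end

section
/- Let x : ℝ → ℝ^d be a C² NT-periodic solution of M·ẍ + C·ẋ + K·x = −∇U(x) + f(t) with M, C, K symmetric, M and K positive semi-definite, and suppose the potential U satisfies the hardening bound ∇U(z)·z ≥ u₀|z|^r for all z, with u₀ > 0 and r > 2. Then u₀·‖x‖_{L^r(0,NT)}^r ≤ ∫₀^{NT} f(t)·x(t) dt + ∫₀^{NT} ẋ(t)·M·ẋ(t) dt. -/
open MeasureTheory intervalIntegral

variable {d : ℕ}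

noncomputable def mvL (M : Matrix (Fin d) (Fin d) ℝ) :
    EuclideanSpace ℝ (Fin d) →L[ℝ] EuclideanSpace ℝ (Fin d) :=
  LinearMap.toContinuousLinearMap
    { toFun := mv M
      map_add' := fun v w => by simp [mv, Matrix.mulVec_add]
      map_smul' := fun c v => by simp [mv, Matrix.mulVec_smul] }

lemma mvL_apply (M : Matrix (Fin d) (Fin d) ℝ) (v : EuclideanSpace ℝ (Fin d)) :
    mvL M v = mv M v := rfl

lemma inner_mv_symm {M : Matrix (Fin d) (Fin d) ℝ} (hMs : M.IsSymm)
    (y z : EuclideanSpace ℝ (Fin d)) :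
    (inner ℝ y (mv M z) : ℝ) = inner ℝ (mv M y) z := by
  simp only [PiLp.inner_apply, RCLike.inner_apply, conj_trivial, mv, PiLp.toLp_apply]
  have h : ∀ v w : Fin d → ℝ, ∑ i, v i * w i = dotProduct v w := fun v w => rfl
  rw [h, h, Matrix.dotProduct_mulVec, ← Matrix.mulVec_transpose, hMs.eq]

theorem stmt_10 {d : ℕ} (N : ℕ) (T : ℝ) (hN : 1 ≤ N) (hT : 0 < T)
    (M C K : Matrix (Fin d) (Fin d) ℝ) (hMs : M.IsSymm) (hCs : C.IsSymm) (hKs : K.IsSymm)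
    (hMpsd : ∀ y : EuclideanSpace ℝ (Fin d), 0 ≤ (inner ℝ y (mv M y) : ℝ))
    (hKpsd : ∀ y : EuclideanSpace ℝ (Fin d), 0 ≤ (inner ℝ y (mv K y) : ℝ))
    (u₀ r : ℝ) (hu₀ : 0 < u₀) (hr : 2 < r)
    (U : EuclideanSpace ℝ (Fin d) → ℝ) (hU : ContDiff ℝ 1 U)
    (hhard : ∀ z : EuclideanSpace ℝ (Fin d), u₀ * ‖z‖ ^ r ≤ (inner ℝ (gradient U z) z : ℝ))
    (f : ℝ → EuclideanSpace ℝ (Fin d)) (hf : Continuous f)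
    (x : ℝ → EuclideanSpace ℝ (Fin d)) (hx : ContDiff ℝ 2 x)
    (hxper : Function.Periodic x (N * T))
    (hode : ∀ t : ℝ, mv M (deriv (deriv x) t) + mv C (deriv x t) + mv K (x t)
      = -gradient U (x t) + f t) :
    u₀ * ∫ t in (0:ℝ)..(N * T), ‖x t‖ ^ r
      ≤ (∫ t in (0:ℝ)..(N * T), (inner ℝ (f t) (x t) : ℝ))
        + ∫ t in (0:ℝ)..(N * T), (inner ℝ (deriv x t) (mv M (deriv x t)) : ℝ) := by
  set a : ℝ := (N : ℝ) * T with ha_def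
  have ha : 0 ≤ a := by positivity
  -- regularity
  have hx2 : ContDiff ℝ (1 + 1 : ℕ) x := by norm_num; exact hx
  have hxd : Differentiable ℝ x := hx.differentiable (by norm_num)
  have hx' : ContDiff ℝ 1 (deriv x) := (contDiff_succ_iff_deriv.mp hx2).2.2
  have hxd' : Differentiable ℝ (deriv x) := hx'.differentiable (by norm_num)
  have cx : Continuous x := hx.continuous
  have cx' : Continuous (deriv x) := hx'.continuous
  have cx'' : Continuous (deriv (deriv x)) := (contDiff_one_iff_deriv.mp hx').2
  -- periodicity values
  have hx0 : x a = x 0 := by simpa using hxper 0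
  have hdx0 : deriv x a = deriv x 0 := by
    have h1 : (fun s => x (s + a)) = x := funext fun s => hxper s
    have h2 := deriv_comp_add_const x a 0
    rw [h1, zero_add] at h2
    exact h2.symm
  -- derivative facts
  have hdx : ∀ t, HasDerivAt x (deriv x t) t := fun t => (hxd t).hasDerivAt
  have hddx : ∀ t, HasDerivAt (deriv x) (deriv (deriv x) t) t := fun t => (hxd' t).hasDerivAt
  have hMd : ∀ t, HasDerivAt (fun s => mv M (deriv x s)) (mv M (deriv (deriv x) t)) t :=
    fun t => ((mvL M).hasFDerivAt.comp_hasDerivAt t (hddx t))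
  have hCd : ∀ t, HasDerivAt (fun s => mv C (x s)) (mv C (deriv x t)) t :=
    fun t => ((mvL C).hasFDerivAt.comp_hasDerivAt t (hdx t))
  -- integrands
  set p : ℝ → ℝ := fun t => (inner ℝ (x t) (mv M (deriv (deriv x) t)) : ℝ) with hp
  set q : ℝ → ℝ := fun t => (inner ℝ (deriv x t) (mv M (deriv x t)) : ℝ) with hq
  set w : ℝ → ℝ := fun t => (inner ℝ (x t) (mv C (deriv x t)) : ℝ) with hw
  have cp : Continuous p := cx.inner ((mvL M).continuous.comp cx'')
  have cq : Continuous q := cx'.inner ((mvL M).continuous.comp cx')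
  have cw : Continuous w := cx.inner ((mvL C).continuous.comp cx')
  -- FTC for g(t) = ⟪x t, M ẋ t⟫
  have hG : ∀ t : ℝ, HasDerivAt (fun s => (inner ℝ (x s) (mv M (deriv x s)) : ℝ))
      (p t + q t) t := by
    intro t
    have := HasDerivAt.inner ℝ (hdx t) (hMd t)
    simpa [hp, hq, real_inner_comm] using this
  have hI1 : (∫ t in (0:ℝ)..a, (p t + q t)) = 0 := by
    rw [intervalIntegral.integral_eq_sub_of_hasDerivAt (fun t _ => hG t)
      (Continuous.intervalIntegrable (μ := volume) (cp.add cq) _ _)]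
    rw [hx0, hdx0, sub_self]
  have hIp : (∫ t in (0:ℝ)..a, p t) = - ∫ t in (0:ℝ)..a, q t := by
    have := intervalIntegral.integral_add (Continuous.intervalIntegrable (μ := volume) cp (0:ℝ) a)
      (Continuous.intervalIntegrable (μ := volume) cq (0:ℝ) a)
    rw [this] at hI1
    linarith
  -- FTC for h(t) = ⟪x t, C x t⟫
  have hH : ∀ t : ℝ, HasDerivAt (fun s => (inner ℝ (x s) (mv C (x s)) : ℝ)) (2 * w t) t := by
    intro t
    have h2 := HasDerivAt.inner ℝ (hdx t) (hCd t)
    have hsymm : (inner ℝ (deriv x t) (mv C (x t)) : ℝ) = w t := by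
      rw [hw, inner_mv_symm hCs, real_inner_comm]
    have : (inner ℝ (x t) (mv C (deriv x t)) : ℝ) + inner ℝ (deriv x t) (mv C (x t)) = 2 * w t := by
      rw [hsymm, hw]; ring
    exact this ▸ h2
  have hIw : (∫ t in (0:ℝ)..a, w t) = 0 := by
    have h0 : (∫ t in (0:ℝ)..a, 2 * w t) = 0 := by
      rw [intervalIntegral.integral_eq_sub_of_hasDerivAt (fun t _ => hH t)
        (Continuous.intervalIntegrable (μ := volume) (continuous_const.mul cw) _ _)]
      rw [hx0, sub_self]
    rw [intervalIntegral.integral_const_mul] at h0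
    linarith
  -- pointwise inequality
  have key : ∀ t : ℝ, u₀ * ‖x t‖ ^ r ≤ (inner ℝ (f t) (x t) : ℝ) - p t - w t := by
    intro t
    have he := congrArg (fun v => (inner ℝ (x t) v : ℝ)) (hode t)
    simp only [inner_add_right, inner_neg_right] at he
    have h1 := hhard (x t)
    have h2 : (inner ℝ (gradient U (x t)) (x t) : ℝ) = inner ℝ (x t) (gradient U (x t)) :=
      real_inner_comm _ _
    have h3 := hKpsd (x t)
    have h4 : (inner ℝ (x t) (f t) : ℝ) = inner ℝ (f t) (x t) := real_inner_comm _ _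
    simp only [hp, hw]
    linarith [he]
  -- integrate
  have cLHS : Continuous (fun t => u₀ * ‖x t‖ ^ r) :=
    continuous_const.mul ((cx.norm).rpow_const fun t => Or.inr (by linarith))
  have cRHS : Continuous (fun t => (inner ℝ (f t) (x t) : ℝ) - p t - w t) :=
    ((hf.inner cx).sub cp).sub cw
  have hmono : (∫ t in (0:ℝ)..a, u₀ * ‖x t‖ ^ r)
      ≤ ∫ t in (0:ℝ)..a, ((inner ℝ (f t) (x t) : ℝ) - p t - w t) :=
    intervalIntegral.integral_mono_on ha (Continuous.intervalIntegrable (μ := volume) cLHS _ _)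
      (Continuous.intervalIntegrable (μ := volume) cRHS _ _) (fun t _ => key t)
  have hsplit : (∫ t in (0:ℝ)..a, ((inner ℝ (f t) (x t) : ℝ) - p t - w t))
      = (∫ t in (0:ℝ)..a, (inner ℝ (f t) (x t) : ℝ)) - (∫ t in (0:ℝ)..a, p t)
        - ∫ t in (0:ℝ)..a, w t := by
    rw [intervalIntegral.integral_sub (f := fun t => (inner ℝ (f t) (x t) : ℝ) - p t) (Continuous.intervalIntegrable (μ := volume) ((hf.inner cx).sub cp) _ _)
      (Continuous.intervalIntegrable (μ := volume) cw _ _),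
      intervalIntegral.integral_sub (Continuous.intervalIntegrable (μ := volume) (hf.inner cx) _ _)
      (Continuous.intervalIntegrable (μ := volume) cp _ _)]
  rw [← intervalIntegral.integral_const_mul]
  rw [hsplit, hIp, hIw] at hmono
  simpa using hmono
end
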